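/- arXiv:1808.05200 — 2 statements merged into one kernel-verified Lean document; each statement's English description precedes it below -/
import Mathlib

section
/- Let P be a locally finite poset colored by a finite simple graph Γ satisfying EC, ND, and for which the Hasse diagram of the lattice of splits FI(P) carries, for each color a, operators X_a, Y_a, H_a with H_a diagonal, satisfying [X_a, Y_a] = H_a. Then for every color b and split (F,I): H_b.⟨F,I⟩ = −⟨F,I⟩ if b is the color of a minimal element of F; H_b.⟨F,I⟩ = +⟨F,I⟩ if b is the color of a maximal element of I; and H_b.⟨F,I⟩ = 0 otherwise. -/
open Finsupp

section ColoredPosets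

open scoped Classical

variable {P : Type*} {Γ : Type*} [PartialOrder P]

/-- `x` is a minimal element of the subset `F`. -/
def MinIn (F : Set P) (x : P) : Prop := x ∈ F ∧ ∀ y ∈ F, y ≤ x → y = x

/-- `y` is a maximal element of the complement (the ideal) of `F`. -/
def MaxInCompl (F : Set P) (y : P) : Prop := y ∉ F ∧ ∀ z, z ∉ F → y ≤ z → z = y

/-- A split of `P`, recorded by its filter part; the ideal is the complement. -/
abbrev Split (P : Type*) [PartialOrder P] := {F : Set P // IsUpperSet F}

theorem upper_erase {F : Set P} (hF : IsUpperSet F) {x : P} (hx : MinIn F x) :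
    IsUpperSet (F \ {x}) := by
  intro u v huv hu
  refine ⟨hF huv hu.1, fun hv => ?_⟩
  rw [Set.mem_singleton_iff] at hv
  subst hv
  exact hu.2 (Set.mem_singleton_iff.mpr (hx.2 u hu.1 huv))

theorem upper_insert {F : Set P} (hF : IsUpperSet F) {y : P} (hy : MaxInCompl F y) :
    IsUpperSet (insert y F) := by
  intro u v huv hu
  rcases hu with rfl | hu
  · by_cases hvF : v ∈ F
    · exact Set.mem_insert_of_mem _ hvF
    · rw [hy.2 v hvF huv]; exact Set.mem_insert _ _
  · exact Set.mem_insert_of_mem _ (hF huv hu)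

/-- The image of the basis vector `⟨F,I⟩` under the color raising operator `X_a`:
the sum of `⟨F-x, I+x⟩` over all minimal elements `x` of `F` of color `a`. -/
noncomputable def XF (κ : P → Γ) (a : Γ) (F : Split P) : Split P →₀ ℂ :=
  ∑ᶠ x : P, if h : MinIn F.1 x ∧ κ x = a then
    Finsupp.single ⟨F.1 \ {x}, upper_erase F.2 h.1⟩ 1 else 0

/-- The color raising operator `X_a` on the free complex vector space on splits. -/
noncomputable def Xop (κ : P → Γ) (a : Γ) : Module.End ℂ (Split P →₀ ℂ) :=
  Finsupp.linearCombination ℂ (XF κ a)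

/-- The image of the basis vector `⟨F,I⟩` under the color lowering operator `Y_a`:
the sum of `⟨F+y, I-y⟩` over all maximal elements `y` of `I` of color `a`. -/
noncomputable def YF (κ : P → Γ) (a : Γ) (F : Split P) : Split P →₀ ℂ :=
  ∑ᶠ y : P, if h : MaxInCompl F.1 y ∧ κ y = a then
    Finsupp.single ⟨insert y F.1, upper_insert F.2 h.1⟩ 1 else 0

/-- The color lowering operator `Y_a`. -/
noncomputable def Yop (κ : P → Γ) (a : Γ) : Module.End ℂ (Split P →₀ ℂ) :=
  Finsupp.linearCombination ℂ (YF κ a)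

/-- The diagonal operator with eigenvalue function `η a`. -/
noncomputable def Hop (η : Γ → Split P → ℂ) (a : Γ) : Module.End ℂ (Split P →₀ ℂ) :=
  Finsupp.linearCombination ℂ (fun F => η a F • Finsupp.single F (1 : ℂ))

/-- The generalized Cartan matrix entries of the simple graph `Γ`. -/
noncomputable def theta (G : SimpleGraph Γ) (a b : Γ) : ℤ :=
  if a = b then 2 else if G.Adj a b then -1 else 0

/-- `Δ_b[(F',I'),(F,I)] = |P_b ∩ (I'−I)| − |P_b ∩ (I−I')|`. -/
noncomputable def Delta (κ : P → Γ) (b : Γ) (F' F : Split P) : ℤ :=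
  (Nat.card {x : P // κ x = b ∧ x ∈ F.1 ∧ x ∉ F'.1} : ℤ)
    - (Nat.card {x : P // κ x = b ∧ x ∈ F'.1 ∧ x ∉ F.1} : ℤ)

/-- One covering step upward in the Hasse diagram of `FI(P)`:
a minimal element of the filter is transferred to the ideal. -/
def SplitStep (F G : Split P) : Prop := ∃ x, MinIn F.1 x ∧ G.1 = F.1 \ {x}

/-- Two splits are in the same component when joined by a finite path in the
Hasse diagram of `FI(P)`, edges traversed in either direction. -/
def SameComponent (F G : Split P) : Prop :=
  Relation.ReflTransGen (fun A B => SplitStep A B ∨ SplitStep B A) F G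

/-- Sum over the colors adjacent to `b` in `Γ`. -/
noncomputable def adjSum [Fintype Γ] (G : SimpleGraph Γ) (b : Γ) (f : Γ → ℤ) : ℤ :=
  ∑ c ∈ Finset.univ.filter (fun c => G.Adj c b), f c

/-- An edge weight function on `FI(P)`. -/
def IsEdgeWeight (G : SimpleGraph Γ) (κ : P → Γ) (η : Γ → Split P → ℂ) : Prop :=
  ∀ (b : Γ) (F : Split P) (x : P) (hx : MinIn F.1 x),
    η b ⟨F.1 \ {x}, upper_erase F.2 hx⟩ - η b F = ((theta G (κ x) b : ℤ) : ℂ)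

/-- A component weight function on `FI(P)`. -/
def IsComponentWeight [Fintype Γ] (G : SimpleGraph Γ) (κ : P → Γ)
    (η : Γ → Split P → ℂ) : Prop :=
  ∀ (b : Γ) (F F' : Split P), SameComponent F F' →
    η b F' - η b F =
      ((2 * Delta κ b F' F - adjSum G b (fun c => Delta κ c F' F) : ℤ) : ℂ)



section Aux
variable {P : Type*} {Γ : Type*} [PartialOrder P]

lemma XF_eq_zero (κ : P → Γ) (b : Γ) (F : Split P)
    (h : ¬ ∃ x, MinIn F.1 x ∧ κ x = b) : XF κ b F = 0 := by
  unfold XF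
  apply finsum_eq_zero_of_forall_eq_zero
  intro x
  rw [dif_neg (fun hx => h ⟨x, hx⟩)]

lemma YF_eq_zero (κ : P → Γ) (b : Γ) (F : Split P)
    (h : ¬ ∃ y, MaxInCompl F.1 y ∧ κ y = b) : YF κ b F = 0 := by
  unfold YF
  apply finsum_eq_zero_of_forall_eq_zero
  intro y
  rw [dif_neg (fun hy => h ⟨y, hy⟩)]

lemma XF_eq_single (κ : P → Γ) (b : Γ)
    (hEC : ∀ x y : P, κ x = κ y → x ≤ y ∨ y ≤ x)
    (F : Split P) (x : P) (hx : MinIn F.1 x) (hκ : κ x = b) :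
    XF κ b F = Finsupp.single ⟨F.1 \ {x}, upper_erase F.2 hx⟩ 1 := by
  unfold XF
  rw [finsum_eq_single _ x]
  · rw [dif_pos ⟨hx, hκ⟩]
  · intro y hy
    rw [dif_neg]
    rintro ⟨hy', hκy⟩
    apply hy
    rcases hEC y x (hκy.trans hκ.symm) with h | h
    · exact hx.2 y hy'.1 h
    · exact (hy'.2 x hx.1 h).symm

lemma YF_eq_single (κ : P → Γ) (b : Γ)
    (hEC : ∀ x y : P, κ x = κ y → x ≤ y ∨ y ≤ x)
    (F : Split P) (y : P) (hy : MaxInCompl F.1 y) (hκ : κ y = b) :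
    YF κ b F = Finsupp.single ⟨insert y F.1, upper_insert F.2 hy⟩ 1 := by
  unfold YF
  rw [finsum_eq_single _ y]
  · rw [dif_pos ⟨hy, hκ⟩]
  · intro z hz
    rw [dif_neg]
    rintro ⟨hz', hκz⟩
    apply hz
    rcases hEC z y (hκz.trans hκ.symm) with h | h
    · exact (hz'.2 y hy.1 h).symm
    · exact hy.2 z hz'.1 h

lemma not_both [LocallyFiniteOrder P] {κ : P → Γ}
    (hEC : ∀ x y : P, κ x = κ y → x ≤ y ∨ y ≤ x)
    (hND : ∀ x y : P, x ⋖ y → κ x ≠ κ y)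
    (F : Split P) {x y : P} (hx : MinIn F.1 x) (hy : MaxInCompl F.1 y)
    (h : κ x = κ y) : False := by
  rcases hEC x y h with hle | hle
  · exact hy.1 (F.2 hle hx.1)
  · have hne : y ≠ x := fun e => hy.1 (e ▸ hx.1)
    have hlt : y < x := lt_of_le_of_ne hle hne
    obtain ⟨z, hz, hzx⟩ := exists_covBy_le_of_lt hlt
    have hzF : z ∈ F.1 := by
      by_contra hzF
      exact hz.lt.ne' (hy.2 z hzF hz.lt.le)
    have hzx' : z = x := hx.2 z hzF hzx
    exact hND y z hz (by rw [hzx', ← h])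

end Aux

/-- Under EC and ND, if diagonal operators `H_a` satisfy
`[X_a, Y_a] = H_a` then their eigenvalues are `-1`, `+1`, or `0` according to
whether the color occurs at a minimal element of the filter, a maximal element
of the ideal, or neither. -/
theorem stmt16 [LocallyFiniteOrder P] [Fintype Γ] (G : SimpleGraph Γ)
    (κ : P → Γ) (hsurj : Function.Surjective κ)
    (hEC : ∀ x y : P, κ x = κ y → x ≤ y ∨ y ≤ x)
    (hND : ∀ x y : P, x ⋖ y → κ x ≠ κ y)
    (η : Γ → Split P → ℂ)
    (hrel : ∀ a : Γ, Xop κ a * Yop κ a - Yop κ a * Xop κ a = Hop η a) :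
    ∀ (b : Γ) (F : Split P),
      ((∃ x : P, MinIn F.1 x ∧ κ x = b) → η b F = -1) ∧
      ((∃ y : P, MaxInCompl F.1 y ∧ κ y = b) → η b F = 1) ∧
      (¬ (∃ x : P, MinIn F.1 x ∧ κ x = b) →
        ¬ (∃ y : P, MaxInCompl F.1 y ∧ κ y = b) → η b F = 0) := by
  intro b F
  have happ : ∀ v : (Split P →₀ ℂ),
      Xop κ b (Yop κ b v) - Yop κ b (Xop κ b v) = Hop η b v := by
    intro v
    have := congrFun (congrArg DFunLike.coe (hrel b)) v
    simpa [Module.End.mul_apply, LinearMap.sub_apply] using this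
  have hX : ∀ F' : Split P, Xop κ b (Finsupp.single F' (1:ℂ)) = XF κ b F' := by
    intro F'
    simp [Xop, Finsupp.linearCombination_single]
  have hY : ∀ F' : Split P, Yop κ b (Finsupp.single F' (1:ℂ)) = YF κ b F' := by
    intro F'
    simp [Yop, Finsupp.linearCombination_single]
  have hH : Hop η b (Finsupp.single F (1:ℂ)) = η b F • Finsupp.single F (1:ℂ) := by
    simp [Hop, Finsupp.linearCombination_single]
  have key := happ (Finsupp.single F (1:ℂ))
  rw [hX, hY, hH] at key
  refine ⟨?_, ?_, ?_⟩
  · rintro ⟨x, hx, hκx⟩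
    have hYF : YF κ b F = 0 := by
      apply YF_eq_zero
      rintro ⟨y, hy, hκy⟩
      exact not_both hEC hND F hx hy (hκx.trans hκy.symm)
    have hXF : XF κ b F = Finsupp.single ⟨F.1 \ {x}, upper_erase F.2 hx⟩ 1 :=
      XF_eq_single κ b hEC F x hx hκx
    set G : Split P := ⟨F.1 \ {x}, upper_erase F.2 hx⟩ with hG
    have hmax : MaxInCompl G.1 x := by
      constructor
      · simp [hG]
      · intro z hz hxz
        by_cases hzF : z ∈ F.1
        · by_contra hne
          exact hz ⟨hzF, by simpa using hne⟩
        · exact absurd (F.2 hxz hx.1) hzF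
    have hYG : YF κ b G = Finsupp.single F (1:ℂ) := by
      rw [YF_eq_single κ b hEC G x hmax hκx]
      congr 1
      apply Subtype.ext
      show insert x (F.1 \ {x}) = F.1
      rw [Set.insert_diff_singleton, Set.insert_eq_self.2 hx.1]
    rw [hYF, hXF, hY, hYG, map_zero] at key
    have := congrFun (congrArg DFunLike.coe key) F
    simp [Finsupp.single_eq_same] at this
    linear_combination -this
  · rintro ⟨y, hy, hκy⟩
    have hXF : XF κ b F = 0 := by
      apply XF_eq_zero
      rintro ⟨x, hx, hκx⟩
      exact not_both hEC hND F hx hy (hκx.trans hκy.symm)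
    have hYF : YF κ b F = Finsupp.single ⟨insert y F.1, upper_insert F.2 hy⟩ 1 :=
      YF_eq_single κ b hEC F y hy hκy
    set G : Split P := ⟨insert y F.1, upper_insert F.2 hy⟩ with hG
    have hmin : MinIn G.1 y := by
      constructor
      · exact Set.mem_insert _ _
      · intro z hz hzy
        rcases hz with hz' | hz'
        · exact hz'
        · exact absurd (F.2 hzy hz') hy.1
    have hXG : XF κ b G = Finsupp.single F (1:ℂ) := by
      rw [XF_eq_single κ b hEC G y hmin hκy]
      congr 1
      apply Subtype.ext
      show insert y F.1 \ {y} = F.1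
      exact Set.insert_diff_self_of_notMem hy.1
    rw [hXF, hYF, hX, hXG, map_zero] at key
    have := congrFun (congrArg DFunLike.coe key) F
    simp [Finsupp.single_eq_same] at this
    linear_combination -this
  · intro h1 h2
    rw [XF_eq_zero κ b F h1, YF_eq_zero κ b F h2, map_zero, map_zero] at key
    have := congrFun (congrArg DFunLike.coe key) F
    simp [Finsupp.single_eq_same] at this
    linear_combination -this



end ColoredPosets
end

section
/- Let P be a locally finite poset colored by a finite simple graph Γ, and suppose the free vector space on FI(P) carries operators {X_a, H_a} satisfying the relations [H_b, X_a] = θ_{ab} X_a for all a, b, such that the eigenvalue of H_a on every basis vector ⟨F,I⟩ lies in {−1, 0, 1, 2, ...}, and such that H_a.⟨F,I⟩ = −⟨F,I⟩ if and only if a is the color of a minimal element of F. If furthermore X_a² = 0 for all a, then P satisfies Mx1GA: for every color b, if y is maximal in P_b then at most one element greater than y has color adjacent to b. -/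
/-!
Evaluating `[H_b, X_a] = θ_{ab} X_a` on `⟨F,I⟩` at the coordinate `⟨F-x, I+x⟩` shows that
`η_b` changes by `θ_{ab}` when a minimal element `x` of color `a` moves from `F` to `I`, as long
as `X_a.⟨F,I⟩` is a finite sum. This is always the case: two incomparable elements of one color
`a` would both be minimal in the filter they generate, and moving one of them would raise `η_a`
from `-1` to `1` while the other still forces the value `-1`. So `η` is an edge weight function.

If `y` is maximal of color `b` and `z₁ ≠ z₂` above `y` have colors adjacent to `b`, remove
`[y, z₁] ∪ [y, z₂]` from the principal filter of `y`: `η_b` starts at `-1`, gains `2` for `y`,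
loses `1` for each `zᵢ` and does not increase for the other elements (none has color `b`). Since
`η_b ≥ -1`, it ends at `-1`, so the remaining filter has a minimal element of color `b`, which
lies above `y`.
-/

open Finsupp

section ColoredPosets

open scoped Classical

variable {P : Type*} {Γ : Type*} [PartialOrder P]

theorem theta_self (G : SimpleGraph Γ) (a : Γ) : theta G a a = 2 := by
  simp [theta]

theorem theta_of_adj {G : SimpleGraph Γ} {a b : Γ} (h : G.Adj a b) : theta G a b = -1 := by
  simp [theta, h.ne, h]

theorem theta_nonpos_of_ne (G : SimpleGraph Γ) {a b : Γ} (h : a ≠ b) : theta G a b ≤ 0 := by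
  simp only [theta, if_neg h]
  split_ifs <;> decide

theorem sum_theta_nonpos {α : Type*} {G : SimpleGraph Γ} {κ : α → Γ} {T : Finset α}
    {y z₁ z₂ : α} (hy : y ∈ T) (hz₁ : z₁ ∈ T) (hz₂ : z₂ ∈ T) (hz : z₁ ≠ z₂)
    (hadj₁ : G.Adj (κ z₁) (κ y)) (hadj₂ : G.Adj (κ z₂) (κ y))
    (hcolor : ∀ x ∈ T, x ≠ y → κ x ≠ κ y) :
    ∑ x ∈ T, theta G (κ x) (κ y) ≤ 0 := by
  have hy₁ : y ≠ z₁ := fun h => hadj₁.ne (congrArg κ h.symm)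
  have hy₂ : y ≠ z₂ := fun h => hadj₂.ne (congrArg κ h.symm)
  have hS : {y, z₁, z₂} ⊆ T := by simp [Finset.insert_subset_iff, hy, hz₁, hz₂]
  have hrest : ∑ x ∈ T \ {y, z₁, z₂}, theta G (κ x) (κ y) ≤ 0 :=
    Finset.sum_nonpos fun x hx => by
      rw [Finset.mem_sdiff, Finset.mem_insert, not_or] at hx
      exact theta_nonpos_of_ne G (hcolor x hx.1 hx.2.1)
  rw [← Finset.sum_sdiff hS, Finset.sum_insert (by simp [hy₁, hy₂]), Finset.sum_pair hz,
    theta_self, theta_of_adj hadj₁, theta_of_adj hadj₂]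
  linarith

theorem MinIn.diff_singleton {F : Set P} {x y : P} (hy : MinIn F y) (hne : y ≠ x) :
    MinIn (F \ {x}) y :=
  ⟨⟨hy.1, hne⟩, fun w hw hwy => hy.2 w hw.1 hwy⟩

theorem minIn_Ici_union_Ici {m₁ m₂ : P} (h : ¬m₂ ≤ m₁) : MinIn (Set.Ici m₁ ∪ Set.Ici m₂) m₁ :=
  ⟨Or.inl le_rfl, fun _ hw hwm =>
    hw.elim (fun h₁ => le_antisymm hwm h₁) (fun h₂ => absurd (le_trans h₂ hwm) h)⟩

theorem minIn_Ici (y : P) : MinIn (Set.Ici y) y :=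
  ⟨le_rfl, fun _ hw hwy => le_antisymm hwy hw⟩

theorem isUpperSet_Ici_sdiff_Icc_union_Icc (y z₁ z₂ : P) :
    IsUpperSet (Set.Ici y \ (Set.Icc y z₁ ∪ Set.Icc y z₂)) := by
  rintro u v huv ⟨hyu, hu⟩
  refine ⟨le_trans hyu huv, fun hv => hu ?_⟩
  rcases hv with ⟨-, hv⟩ | ⟨-, hv⟩
  · exact Or.inl ⟨hyu, le_trans huv hv⟩
  · exact Or.inr ⟨hyu, le_trans huv hv⟩

theorem Hop_apply (η : Γ → Split P → ℂ) (d : Γ) (v : Split P →₀ ℂ) (F : Split P) :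
    Hop η d v F = η d F * v F := by
  simp +contextual [Hop, Finsupp.linearCombination_apply, Finsupp.sum_apply, Finsupp.single_apply,
    Finsupp.sum_ite_eq', mul_comm]

theorem Hop_single (η : Γ → Split P → ℂ) (d : Γ) (F : Split P) :
    Hop η d (Finsupp.single F 1) = η d F • Finsupp.single F 1 := by
  simp [Hop]

theorem Xop_single (κ : P → Γ) (a : Γ) (F : Split P) :
    Xop κ a (Finsupp.single F 1) = XF κ a F := by
  simp [Xop]

theorem XF_apply_erase (κ : P → Γ) {a : Γ} {F : Split P}
    (hfin : {x : P | MinIn F.1 x ∧ κ x = a}.Finite) {x : P} (hx : MinIn F.1 x) (hxa : κ x = a) :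
    XF κ a F ⟨F.1 \ {x}, upper_erase F.2 hx⟩ = 1 := by
  set term : P → Split P →₀ ℂ := fun x' => if h : MinIn F.1 x' ∧ κ x' = a then
    Finsupp.single ⟨F.1 \ {x'}, upper_erase F.2 h.1⟩ 1 else 0
  have hsupp : (Function.support term).Finite :=
    hfin.subset fun x' hx' => by
      by_contra h
      exact hx' (dif_neg h)
  rw [XF, ← Finsupp.applyAddHom_apply, AddMonoidHom.map_finsum _ hsupp, finsum_eq_single _ x]
  · simp [term, hx, hxa]
  · intro x' hne
    simp only [term, Finsupp.applyAddHom_apply]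
    split_ifs with h
    · refine Finsupp.single_eq_of_ne fun heq => ?_
      have hmem : x' ∈ F.1 \ {x} := ⟨h.1.1, hne⟩
      have hsets : F.1 \ {x} = F.1 \ {x'} := congrArg Subtype.val heq
      rw [hsets] at hmem
      exact hmem.2 rfl
    · rfl

section EdgeWeight

variable {G : SimpleGraph Γ} {κ : P → Γ} {η : Γ → Split P → ℂ}

theorem eta_erase_of_finite
    (hrel : ∀ a b : Γ,
      Hop η b * Xop κ a - Xop κ a * Hop η b = ((theta G a b : ℤ) : ℂ) • Xop κ a)
    {F : Split P} {a : Γ} (hfin : {x : P | MinIn F.1 x ∧ κ x = a}.Finite)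
    {x : P} (hx : MinIn F.1 x) (hxa : κ x = a) (d : Γ) :
    η d ⟨F.1 \ {x}, upper_erase F.2 hx⟩ = η d F + theta G a d := by
  have h := DFunLike.congr_fun (LinearMap.congr_fun (hrel a d) (Finsupp.single F 1))
    ⟨F.1 \ {x}, upper_erase F.2 hx⟩
  simp only [LinearMap.sub_apply, Module.End.mul_apply, LinearMap.smul_apply, Finsupp.sub_apply,
    Finsupp.smul_apply, Hop_apply, Hop_single, map_smul, Xop_single, smul_eq_mul,
    XF_apply_erase κ hfin hx hxa] at h
  linear_combination h

theorem isChain_color_fiber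
    (hrel : ∀ a b : Γ,
      Hop η b * Xop κ a - Xop κ a * Hop η b = ((theta G a b : ℤ) : ℂ) • Xop κ a)
    (hminus : ∀ (a : Γ) (F : Split P), η a F = -1 ↔ ∃ x : P, MinIn F.1 x ∧ κ x = a)
    (b : Γ) : IsChain (· ≤ ·) (κ ⁻¹' {b}) := by
  intro m₁ hm₁ m₂ hm₂ hne
  by_contra! hincomp
  let U : Split P := ⟨Set.Ici m₁ ∪ Set.Ici m₂, (isUpperSet_Ici m₁).union (isUpperSet_Ici m₂)⟩
  have hmin₁ : MinIn U.1 m₁ := minIn_Ici_union_Ici hincomp.2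
  have hmin₂ : MinIn U.1 m₂ := by
    simpa only [U, Set.union_comm] using minIn_Ici_union_Ici hincomp.1
  have hfin : {x : P | MinIn U.1 x ∧ κ x = b}.Finite := by
    refine (Set.toFinite {m₁, m₂}).subset fun w ⟨hw, _⟩ => ?_
    rcases hw.1 with h | h
    · exact Or.inl (hw.2 m₁ hmin₁.1 h).symm
    · exact Or.inr (hw.2 m₂ hmin₂.1 h).symm
  have hstep := eta_erase_of_finite hrel hfin hmin₁ hm₁ b
  rw [(hminus b U).2 ⟨m₁, hmin₁, hm₁⟩, theta_self,
    (hminus b _).2 ⟨m₂, hmin₂.diff_singleton hne.symm, hm₂⟩] at hstep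
  norm_num at hstep

theorem isEdgeWeight_of_commutator
    (hrel : ∀ a b : Γ,
      Hop η b * Xop κ a - Xop κ a * Hop η b = ((theta G a b : ℤ) : ℂ) • Xop κ a)
    (hminus : ∀ (a : Γ) (F : Split P), η a F = -1 ↔ ∃ x : P, MinIn F.1 x ∧ κ x = a) :
    IsEdgeWeight G κ η := by
  intro b F x hx
  have hsub : {x' : P | MinIn F.1 x' ∧ κ x' = κ x}.Subsingleton := by
    rintro u ⟨hu, hux⟩ v ⟨hv, hvx⟩
    rcases (isChain_color_fiber hrel hminus (κ x)).total hux hvx with h | h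
    · exact hv.2 u hu.1 h
    · exact (hu.2 v hv.1 h).symm
  rw [eta_erase_of_finite hrel hsub.finite hx rfl b, add_sub_cancel_left]

theorem IsEdgeWeight.eta_diff_finset (hη : IsEdgeWeight G κ η) (b : Γ) (T : Finset P) :
    ∀ (F : Split P), (T : Set P) ⊆ F.1 → ∀ hT : IsUpperSet (F.1 \ T),
      η b ⟨F.1 \ T, hT⟩ = η b F + ∑ x ∈ T, (theta G (κ x) b : ℂ) := by
  induction T using Finset.strongInduction with
  | H T ih =>
  intro F hTF hT
  rcases T.eq_empty_or_nonempty with rfl | hne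
  · simp
  obtain ⟨x, hxT, hxmin⟩ := T.exists_minimal hne
  have hx : MinIn F.1 x := by
    refine ⟨hTF hxT, fun w hw hwx => ?_⟩
    by_cases hwT : w ∈ T
    · exact le_antisymm hwx (hxmin hwT hwx)
    · exact absurd (hT hwx ⟨hw, hwT⟩).2 (by simpa using hxT)
  have hsets : (F.1 \ {x}) \ ↑(T.erase x) = F.1 \ T := by
    rw [Finset.coe_erase, Set.sdiff_sdiff, Set.union_sdiff_self,
      Set.union_eq_right.2 (by simpa using hxT)]
  have hTF' : ↑(T.erase x) ⊆ F.1 \ {x} := by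
    rw [Finset.coe_erase]
    exact Set.sdiff_subset_sdiff_left hTF
  rw [← Finset.add_sum_erase T _ hxT, ← add_assoc, ← eq_add_of_sub_eq' (hη b F x hx),
    ← ih (T.erase x) (Finset.erase_ssubset hxT) ⟨F.1 \ {x}, upper_erase F.2 hx⟩ hTF' (hsets ▸ hT)]
  exact congrArg (η b) (Subtype.ext hsets.symm)

theorem IsEdgeWeight.eq_of_lt_of_adj [LocallyFiniteOrder P] (hη : IsEdgeWeight G κ η)
    (heig : ∀ (a : Γ) (F : Split P), ∃ n : ℤ, -1 ≤ n ∧ η a F = (n : ℂ))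
    (hminus : ∀ (a : Γ) (F : Split P), η a F = -1 ↔ ∃ x : P, MinIn F.1 x ∧ κ x = a)
    {y z₁ z₂ : P} (hmax : ∀ z : P, κ z = κ y → ¬y < z)
    (hyz₁ : y < z₁) (hadj₁ : G.Adj (κ z₁) (κ y)) (hyz₂ : y < z₂) (hadj₂ : G.Adj (κ z₂) (κ y)) :
    z₁ = z₂ := by
  by_contra hz
  let F : Split P := ⟨Set.Ici y, isUpperSet_Ici y⟩
  let T : Finset P := Finset.Icc y z₁ ∪ Finset.Icc y z₂
  have hT : (T : Set P) = Set.Icc y z₁ ∪ Set.Icc y z₂ := by simp [T]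
  have hTF : (T : Set P) ⊆ F.1 := by
    rw [hT]
    exact Set.union_subset (fun _ h => h.1) (fun _ h => h.1)
  have hFT : IsUpperSet (F.1 \ T) := hT ▸ isUpperSet_Ici_sdiff_Icc_union_Icc y z₁ z₂
  have hyT : y ∈ T := by simp [T, hyz₁.le]
  have hsum : ∑ x ∈ T, theta G (κ x) (κ y) ≤ 0 :=
    sum_theta_nonpos hyT (by simp [T, hyz₁.le]) (by simp [T, hyz₂.le]) hz hadj₁ hadj₂
      fun x hx hxy hxc => hmax x hxc (lt_of_le_of_ne (hTF hx) (Ne.symm hxy))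
  have hdiff := hη.eta_diff_finset (κ y) T F hTF hFT
  rw [(hminus (κ y) F).2 ⟨y, minIn_Ici y, rfl⟩] at hdiff
  obtain ⟨n, hn, hηn⟩ := heig (κ y) ⟨F.1 \ T, hFT⟩
  have hn' : n = -1 + ∑ x ∈ T, theta G (κ x) (κ y) := by
    exact_mod_cast hηn.symm.trans hdiff
  have hηT : η (κ y) ⟨F.1 \ T, hFT⟩ = -1 := by
    rw [hηn, show n = -1 by omega]
    norm_num
  obtain ⟨x, hx, hxy⟩ := (hminus (κ y) _).1 hηT
  exact hmax x hxy (lt_of_le_of_ne hx.1.1 fun h => hx.1.2 (h ▸ hyT))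

end EdgeWeight

theorem stmt19_general [LocallyFiniteOrder P] (G : SimpleGraph Γ)
    (κ : P → Γ)
    (η : Γ → Split P → ℂ)
    (hrel : ∀ a b : Γ,
      Hop η b * Xop κ a - Xop κ a * Hop η b = ((theta G a b : ℤ) : ℂ) • Xop κ a)
    (heig : ∀ (a : Γ) (F : Split P), ∃ n : ℤ, -1 ≤ n ∧ η a F = (n : ℂ))
    (hminus : ∀ (a : Γ) (F : Split P),
      η a F = -1 ↔ ∃ x : P, MinIn F.1 x ∧ κ x = a) :
    ∀ y : P, (∀ z : P, κ z = κ y → ¬ y < z) →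
      Nat.card {z : P // y < z ∧ G.Adj (κ z) (κ y)} ≤ 1 := by
  intro y hmax
  have hη := isEdgeWeight_of_commutator hrel hminus
  have : Subsingleton {z : P // y < z ∧ G.Adj (κ z) (κ y)} :=
    ⟨fun ⟨_, hyz₁, hadj₁⟩ ⟨_, hyz₂, hadj₂⟩ =>
      Subtype.ext (hη.eq_of_lt_of_adj heig hminus hmax hyz₁ hadj₁ hyz₂ hadj₂)⟩
  exact Finite.card_le_one_iff_subsingleton.2 this

/-- If the operators `{X_a, H_a}` satisfy the relations
`[H_b, X_a] = θ_{ab} X_a` with eigenvalues in `{-1, 0, 1, 2, ...}`, with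
eigenvalue `-1` exactly at the colors of minimal elements of filters, and
`X_a² = 0` for all `a`, then `P` satisfies Mx1GA. -/
theorem stmt19 [LocallyFiniteOrder P] [Fintype Γ] (G : SimpleGraph Γ)
    (κ : P → Γ) (hsurj : Function.Surjective κ)
    (η : Γ → Split P → ℂ)
    (hrel : ∀ a b : Γ,
      Hop η b * Xop κ a - Xop κ a * Hop η b = ((theta G a b : ℤ) : ℂ) • Xop κ a)
    (heig : ∀ (a : Γ) (F : Split P), ∃ n : ℤ, -1 ≤ n ∧ η a F = (n : ℂ))
    (hminus : ∀ (a : Γ) (F : Split P),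
      η a F = -1 ↔ ∃ x : P, MinIn F.1 x ∧ κ x = a)
    (hsq : ∀ a : Γ, Xop κ a * Xop κ a = 0) :
    ∀ y : P, (∀ z : P, κ z = κ y → ¬ y < z) →
      Nat.card {z : P // y < z ∧ G.Adj (κ z) (κ y)} ≤ 1 :=
  stmt19_general G κ η hrel heig hminus

end ColoredPosets
end
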